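/- Let X be a compact Hausdorff space. Then the free set number equals the tightness: F(X) = t(X). In particular, if every free sequence in X is countable then X is countably tight. -/

import Mathlib

open Set Cardinal

universe u

/-- A set `S` is free in `X` if it admits a well-ordering such that for every `b ∈ S`
the closure of the set of predecessors of `b` is disjoint from the closure of the set
of the remaining elements. Free sets are exactly the ranges of free sequences. -/
def IsFreeSet {X : Type u} [TopologicalSpace X] (S : Set X) : Prop :=
  ∃ r : S → S → Prop, IsWellOrder S r ∧
    ∀ b : S, closure (Subtype.val '' {a | r a b}) ∩ closure (Subtype.val '' {a | ¬ r a b}) = ∅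

/-- The free set number `F(X)`: the supremum of the cardinalities (lengths) of free
sets (free sequences) in `X` (by the usual convention, at least `ℵ₀`). -/
noncomputable def freeSetNumber (X : Type u) [TopologicalSpace X] : Cardinal.{u} :=
  ℵ₀ ⊔ ⨆ S : {S : Set X // IsFreeSet S}, #S.1

/-- The tightness `t(X)`: the least infinite cardinal `κ` such that whenever
`x ∈ closure A` there is `B ⊆ A` with `|B| ≤ κ` and `x ∈ closure B`. -/
noncomputable def tightness (X : Type u) [TopologicalSpace X] : Cardinal.{u} :=
  sInf {κ : Cardinal.{u} | ℵ₀ ≤ κ ∧ ∀ (A : Set X) (x : X), x ∈ closure A →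
    ∃ B ⊆ A, #B ≤ κ ∧ x ∈ closure B}

section Aux

variable {X : Type u} [TopologicalSpace X]

/-- Separate a point from a closed set by an open set whose closure misses the point. -/
lemma sep_open [CompactSpace X] [T2Space X] {x : X} {D : Set X}
    (hD : IsClosed D) (hx : x ∉ D) :
    ∃ U : Set X, IsOpen U ∧ D ⊆ U ∧ x ∉ closure U := by
  obtain ⟨V, U, hV, hU, hxV, hDU, hVU⟩ :=
    normal_separation (isClosed_singleton (x := x)) hD (by simpa using hx)
  refine ⟨U, hU, hDU, fun hxc => ?_⟩
  obtain ⟨z, hzV, hzU⟩ := mem_closure_iff.mp hxc V hV (hxV rfl)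
  exact hVU.le_bot ⟨hzV, hzU⟩

open Classical in
/-- Canonical choice of an open set containing `closure B` with `x` outside its closure. -/
noncomputable def uChoice (x : X) (B : Set X) : Set X :=
  if h : ∃ U : Set X, IsOpen U ∧ closure B ⊆ U ∧ x ∉ closure U then h.choose else ∅

lemma uChoice_spec [CompactSpace X] [T2Space X] {x : X} {B : Set X} (h : x ∉ closure B) :
    IsOpen (uChoice x B) ∧ closure B ⊆ uChoice x B ∧ x ∉ closure (uChoice x B) := by
  have hex : ∃ U : Set X, IsOpen U ∧ closure B ⊆ U ∧ x ∉ closure U :=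
    sep_open isClosed_closure h
  rw [uChoice, dif_pos hex]
  exact hex.choose_spec

open Classical in
/-- Canonical choice of a point from a set. -/
noncomputable def pickPt (x : X) (s : Set X) : X :=
  if h : s.Nonempty then h.choose else x

lemma pickPt_mem {x : X} {s : Set X} (h : s.Nonempty) : pickPt x s ∈ s := by
  rw [pickPt, dif_pos h]; exact h.choose_spec

variable (A : Set X) (x : X) (o : Ordinal.{u})

/-- The transfinite recursion producing the free sequence. -/
noncomputable def fseq : o.ToType → X :=
  (IsWellFounded.wf (r := ((· < ·) : o.ToType → o.ToType → Prop))).fix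
    (fun α prev =>
      pickPt x (((⋂ β : Iio α, closure (A \ closure (uChoice x
          {z | ∃ γ, ∃ h : γ < β.1, prev γ (h.trans β.2) = z}))) ∩
        closure (A \ closure (uChoice x {z | ∃ γ, ∃ h : γ < α, prev γ h = z}))) ∩ A))

/-- The open set chosen at stage `α`. -/
noncomputable def UsD (α : o.ToType) : Set X := uChoice x (fseq A x o '' Iio α)

/-- The closed set at stage `α`. -/
noncomputable def KsD (α : o.ToType) : Set X :=
  ⋂ β : Iio α, closure (A \ closure (UsD A x o β.1))

lemma fseq_eq (α : o.ToType) :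
    fseq A x o α =
      pickPt x ((KsD A x o α ∩ closure (A \ closure (UsD A x o α))) ∩ A) := by
  have himg : ∀ β : o.ToType,
      fseq A x o '' Iio β = {z | ∃ γ, ∃ _ : γ < β, fseq A x o γ = z} := by
    intro β
    ext z
    simp only [mem_setOf_eq, mem_image, mem_Iio]
    exact ⟨fun ⟨γ, h, hz⟩ => ⟨γ, h, hz⟩, fun ⟨γ, h, hz⟩ => ⟨γ, h, hz⟩⟩
  simp only [KsD, UsD, himg]
  rw [fseq, WellFounded.fix_eq]

end Aux

section Core

variable {X : Type u} [TopologicalSpace X] [CompactSpace X] [T2Space X]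

/-- The core construction: from a failure of `κ`-tightness at a `κ`-closed set, build a
free set of cardinality `κ⁺`. -/
lemma exists_free_of_kappa_closed (κ : Cardinal.{u}) (hκ : ℵ₀ ≤ κ) (A : Set X) (x : X)
    (hxA : x ∈ closure A) (hxnA : x ∉ A)
    (hcl : ∀ B ⊆ A, #B ≤ κ → closure B ⊆ A) :
    ∃ S : Set X, IsFreeSet S ∧ #S = Order.succ κ := by
  classical
  set o : Ordinal.{u} := (Order.succ κ).ord with ho
  set ι := o.ToType
  let f : ι → X := fseq A x o
  let Us : ι → Set X := UsD A x o
  let Ks : ι → Set X := KsD A x o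
  set Lg : Set X → Prop :=
    fun K => ∀ A' ⊆ A, x ∈ closure A' → (K ∩ closure A' ∩ A).Nonempty with hLg
  -- cardinality of initial segments
  have hIio : ∀ α : ι, #(f '' Iio α) ≤ κ := by
    intro α
    have h1 : #(f '' Iio α) ≤ #(Iio α) := mk_image_le
    have h2 : #(Iio α) < Order.succ κ := mk_Iio_ord_toType α
    exact h1.trans (Order.lt_succ_iff.mp h2)
  -- the shrink lemma
  have hshrink : ∀ (K W : Set X), Lg K → IsClosed W → x ∉ W →
      Lg (K ∩ closure (A \ W)) := by
    intro K W hK hW hxW A' hA'A hxA'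
    have hxA'' : x ∈ closure (A' \ W) := by
      have hsub : closure A' ⊆ closure (A' ∩ W) ∪ closure (A' \ W) := by
        rw [← closure_union]
        apply closure_mono
        intro z hz
        by_cases hzW : z ∈ W
        · exact Or.inl ⟨hz, hzW⟩
        · exact Or.inr ⟨hz, hzW⟩
      rcases hsub hxA' with h | h
      · exact absurd (closure_minimal inter_subset_right hW h) hxW
      · exact h
    obtain ⟨z, hz⟩ := hK (A' \ W) (fun y hy => hA'A hy.1) hxA''
    refine ⟨z, ⟨⟨hz.1.1, ?_⟩, ?_⟩, hz.2⟩
    · exact closure_mono (show A' \ W ⊆ A \ W from fun y hy => ⟨hA'A hy.1, hy.2⟩) hz.1.2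
    · exact closure_mono diff_subset hz.1.2
  -- goodness of a stage, given largeness and previous points in A
  have hgood : ∀ α : ι, Lg (Ks α) → (∀ γ, γ < α → f γ ∈ A) →
      (x ∉ closure (f '' Iio α)) ∧ f α ∈ Ks α ∩ closure (A \ closure (Us α)) ∩ A := by
    intro α hLgα hprev
    have hBA : f '' Iio α ⊆ A := by rintro _ ⟨γ, hγ, rfl⟩; exact hprev γ hγ
    have hxB : x ∉ closure (f '' Iio α) :=
      fun hc => hxnA (hcl _ hBA (hIio α) hc)
    obtain ⟨hUopen, hUsub, hxU⟩ := uChoice_spec (x := x) hxB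
    have hLg' : Lg (Ks α ∩ closure (A \ closure (Us α))) :=
      hshrink _ _ hLgα isClosed_closure hxU
    obtain ⟨z, hz⟩ := hLg' A subset_rfl hxA
    have hne : (Ks α ∩ closure (A \ closure (Us α)) ∩ A).Nonempty := ⟨z, hz.1.1, hz.2⟩
    refine ⟨hxB, ?_⟩
    rw [show f α = pickPt x ((Ks α ∩ closure (A \ closure (Us α))) ∩ A) from fseq_eq A x o α]
    exact pickPt_mem hne
  -- main invariant, by well-founded induction
  have hP : ∀ α : ι, Lg (Ks α) ∧ ∀ γ, γ < α → f γ ∈ Ks γ ∩ closure (A \ closure (Us γ)) ∩ A := by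
    intro α
    induction α using WellFoundedLT.induction with
    | ind α IH =>
      have hprevA : ∀ γ, γ < α → f γ ∈ Ks γ ∩ closure (A \ closure (Us γ)) ∩ A := by
        intro γ hγ
        exact (hgood γ (IH γ hγ).1 (fun δ hδ => ((IH γ hγ).2 δ hδ).2)).2
      refine ⟨?_, hprevA⟩
      -- cases on the shape of Iio α
      by_cases hne : (Iio α).Nonempty
      · by_cases hmax : ∃ δ, δ < α ∧ ∀ γ, γ < α → γ ≤ δ
        · -- successor case
          obtain ⟨δ, hδα, hδmax⟩ := hmax
          have hKeq : Ks α = Ks δ ∩ closure (A \ closure (Us δ)) := by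
            apply subset_antisymm
            · intro z hz
              exact ⟨mem_iInter.mpr fun β => mem_iInter.mp hz ⟨β.1, β.2.trans hδα⟩,
                mem_iInter.mp hz ⟨δ, hδα⟩⟩
            · intro z hz
              refine mem_iInter.mpr fun β => ?_
              rcases lt_or_eq_of_le (hδmax β.1 β.2) with h | h
              · exact mem_iInter.mp hz.1 ⟨β.1, h⟩
              · rw [show (β.1 : ι) = δ from h]; exact hz.2
          rw [hKeq]
          have hBA : f '' Iio δ ⊆ A := by
            rintro _ ⟨γ, hγ, rfl⟩
            exact (hprevA γ (hγ.trans hδα)).2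
          have hxB : x ∉ closure (f '' Iio δ) :=
            fun hc => hxnA (hcl _ hBA (hIio δ) hc)
          obtain ⟨hUopen, hUsub, hxU⟩ := uChoice_spec (x := x) hxB
          exact hshrink _ _ (IH δ hδα).1 isClosed_closure hxU
        · -- limit case
          push_neg at hmax
          intro A' hA'A hxA'
          -- choose witnesses below α
          have hch : ∀ β : Iio α,
              ((Ks β.1 ∩ closure (A \ closure (Us β.1))) ∩ closure A' ∩ A).Nonempty := by
            rintro ⟨β, hβ⟩
            have hBA : f '' Iio β ⊆ A := by
              rintro _ ⟨γ, hγ, rfl⟩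
              exact (hprevA γ (hγ.trans hβ)).2
            have hxB : x ∉ closure (f '' Iio β) :=
              fun hc => hxnA (hcl _ hBA (hIio β) hc)
            obtain ⟨hUopen, hUsub, hxU⟩ := uChoice_spec (x := x) hxB
            exact hshrink _ _ (IH β hβ).1 isClosed_closure hxU A' hA'A hxA'
          choose y hy using hch
          haveI : Nonempty (Iio α) := hne.to_subtype
          let M : Iio α → Set X := fun β => closure (y '' {γ : Iio α | β.1 ≤ γ.1})
          have hMne : ∀ β, (M β).Nonempty := by
            intro β
            have hβ : β ∈ {γ : Iio α | β.1 ≤ γ.1} := show β.1 ≤ β.1 from le_rfl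
            exact ⟨y β, subset_closure (mem_image_of_mem y hβ)⟩
          have hMdir : Directed (· ⊇ ·) M := by
            intro β γ
            rcases le_total β.1 γ.1 with h | h
            · exact ⟨γ, closure_mono (image_mono fun δ hδ => h.trans hδ),
                subset_rfl⟩
            · exact ⟨β, subset_rfl,
                closure_mono (image_mono fun δ hδ => h.trans hδ)⟩
          obtain ⟨z, hz⟩ := IsCompact.nonempty_iInter_of_directed_nonempty_isCompact_isClosed
            M hMdir hMne (fun β => isClosed_closure.isCompact) (fun β => isClosed_closure)
          have hzA' : z ∈ closure A' := by
            have : M (Classical.arbitrary _) ⊆ closure A' := by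
              apply closure_minimal ?_ isClosed_closure
              rintro _ ⟨γ, _, rfl⟩
              exact (hy γ).1.2
            exact this (mem_iInter.mp hz _)
          have hzA : z ∈ A := by
            have hRA : range y ⊆ A := by rintro _ ⟨γ, rfl⟩; exact (hy γ).2
            have hRκ : #(range y) ≤ κ := by
              have := mk_range_le (f := y)
              have hIioκ : #(Iio α) ≤ κ := Order.lt_succ_iff.mp (mk_Iio_ord_toType α)
              exact this.trans hIioκ
            have : M (Classical.arbitrary _) ⊆ closure (range y) := by
              apply closure_mono
              rintro _ ⟨γ, _, rfl⟩
              exact ⟨γ, rfl⟩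
            exact hcl _ hRA hRκ (this (mem_iInter.mp hz _))
          have hzK : z ∈ Ks α := by
            refine mem_iInter.mpr fun β => ?_
            have hsub : M β ⊆ closure (A \ closure (Us β.1)) := by
              apply closure_minimal ?_ isClosed_closure
              rintro _ ⟨γ, hγ, rfl⟩
              have hγ' : β.1 ≤ γ.1 := hγ
              rcases lt_or_eq_of_le hγ' with h | h
              · exact mem_iInter.mp (hy γ).1.1.1 ⟨β.1, h⟩
              · have hβγ : (β : Iio α) = γ := Subtype.ext h
                rw [← hβγ]
                exact (hy β).1.1.2
            exact hsub (mem_iInter.mp hz β)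
          exact ⟨z, ⟨hzK, hzA'⟩, hzA⟩
      · -- Iio α empty
        rw [not_nonempty_iff_eq_empty] at hne
        intro A' hA'A hxA'
        obtain ⟨a, ha⟩ : A'.Nonempty := by
          rcases A'.eq_empty_or_nonempty with h | h
          · rw [h, closure_empty] at hxA'; exact absurd hxA' (notMem_empty x)
          · exact h
        have hemp : IsEmpty (↑(Iio α) : Type u) := by
          rw [hne]
          infer_instance
        exact ⟨a, ⟨mem_iInter.mpr fun β => hemp.elim β, subset_closure ha⟩, hA'A ha⟩
  have hfmem : ∀ α : ι, f α ∈ Ks α ∩ closure (A \ closure (Us α)) ∩ A := by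
    intro α
    exact (hgood α (hP α).1 (fun γ hγ => ((hP α).2 γ hγ).2)).2
  have hxBall : ∀ α : ι, x ∉ closure (f '' Iio α) := by
    intro α
    exact (hgood α (hP α).1 (fun γ hγ => ((hP α).2 γ hγ).2)).1
  -- basic separation facts
  have hUspec : ∀ α : ι, IsOpen (Us α) ∧ closure (f '' Iio α) ⊆ Us α ∧ x ∉ closure (Us α) :=
    fun α => uChoice_spec (hxBall α)
  have hfnotU : ∀ α : ι, f α ∉ Us α := by
    intro α
    have h1 : f α ∈ closure (A \ closure (Us α)) := (hfmem α).1.2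
    have h2 : closure (A \ closure (Us α)) ⊆ (Us α)ᶜ := by
      apply closure_minimal ?_ (isClosed_compl_iff.mpr (hUspec α).1)
      intro z hz hzU
      exact hz.2 (subset_closure hzU)
    exact h2 h1
  have hTailU : ∀ α γ : ι, α < γ → f γ ∈ closure (A \ closure (Us α)) := by
    intro α γ hαγ
    exact mem_iInter.mp (hfmem γ).1.1 ⟨α, hαγ⟩
  -- injectivity
  have hinj : Function.Injective f := by
    intro a b hab
    by_contra hne
    rcases lt_or_gt_of_ne hne with h | h
    · have h1 : f a ∈ Us b := (hUspec b).2.1 (subset_closure ⟨a, h, rfl⟩)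
      rw [hab] at h1
      exact hfnotU b h1
    · have h1 : f b ∈ Us a := (hUspec a).2.1 (subset_closure ⟨b, h, rfl⟩)
      rw [← hab] at h1
      exact hfnotU a h1
  refine ⟨range f, ?_, ?_⟩
  · -- IsFreeSet
    let e : ι ≃ range f := Equiv.ofInjective f hinj
    refine ⟨fun a b => e.symm a < e.symm b, ?_, ?_⟩
    · exact @RelEmbedding.isWellOrder _ _ _ _
        (⟨e.symm.toEmbedding, Iff.rfl⟩ : ((fun a b => e.symm a < e.symm b) : range f → range f → Prop) ↪r ((· < ·) : ι → ι → Prop))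
        isWellOrder_lt
    · intro b
      set ξ := e.symm b with hξ
      have hval : ∀ γ : ι, ((e γ : range f) : X) = f γ := fun γ => rfl
      have claim1 : Subtype.val '' {a : range f | e.symm a < ξ} = f '' Iio ξ := by
        ext z
        constructor
        · rintro ⟨a, ha, rfl⟩
          exact ⟨e.symm a, ha, by rw [← hval (e.symm a), Equiv.apply_symm_apply]⟩
        · rintro ⟨γ, hγ, rfl⟩
          exact ⟨e γ, by simpa using hγ, rfl⟩
      have claim2 : Subtype.val '' {a : range f | ¬ e.symm a < ξ} = f '' Ici ξ := by
        ext z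
        constructor
        · rintro ⟨a, ha, rfl⟩
          exact ⟨e.symm a, not_lt.mp ha, by rw [← hval (e.symm a), Equiv.apply_symm_apply]⟩
        · rintro ⟨γ, hγ, rfl⟩
          exact ⟨e γ, by simpa using not_lt.mpr hγ, rfl⟩
      rw [claim1, claim2]
      have hIci : f '' Ici ξ = insert (f ξ) (f '' Ioi ξ) := by
        rw [← Ioi_insert, image_insert_eq]
      rw [hIci, ← singleton_union, closure_union]
      apply eq_empty_of_forall_notMem
      rintro z ⟨hz1, hz2⟩
      have hzU : z ∈ Us ξ := (hUspec ξ).2.1 hz1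
      rcases hz2 with hz2 | hz2
      · rw [closure_singleton] at hz2
        rw [mem_singleton_iff.mp hz2] at hzU
        exact hfnotU ξ hzU
      · have hsub : closure (f '' Ioi ξ) ⊆ (Us ξ)ᶜ := by
          apply closure_minimal ?_ (isClosed_compl_iff.mpr (hUspec ξ).1)
          rintro _ ⟨γ, hγ, rfl⟩ hmem
          have h1 : f γ ∈ closure (A \ closure (Us ξ)) := hTailU ξ γ hγ
          have h2 : closure (A \ closure (Us ξ)) ⊆ (Us ξ)ᶜ := by
            apply closure_minimal ?_ (isClosed_compl_iff.mpr (hUspec ξ).1)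
            intro w hw hwU
            exact hw.2 (subset_closure hwU)
          exact h2 h1 hmem
        exact hsub hz2 hzU
  · rw [mk_range_eq f hinj]
    exact mk_ord_toType (Order.succ κ)

/-- From a failure of `κ`-tightness, build a free set of cardinality `> κ`. -/
lemma exists_big_free (κ : Cardinal.{u}) (hκ : ℵ₀ ≤ κ) (A : Set X) (x : X)
    (hx : x ∈ closure A) (h : ∀ B ⊆ A, #B ≤ κ → x ∉ closure B) :
    ∃ S : Set X, IsFreeSet S ∧ κ < #S := by
  classical
  set C : Set X := ⋃ B ∈ {B : Set X | B ⊆ A ∧ #B ≤ κ}, closure B with hC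
  have hAC : A ⊆ C := by
    intro a ha
    have h1 : ({a} : Set X) ∈ {B : Set X | B ⊆ A ∧ #↑B ≤ κ} :=
      ⟨singleton_subset_iff.mpr ha, by rw [mk_singleton]; exact one_le_aleph0.trans hκ⟩
    exact mem_biUnion h1 (subset_closure rfl)
  have hxC : x ∈ closure C := closure_mono hAC hx
  have hxnC : x ∉ C := by
    intro hc
    obtain ⟨B, hB, hxB⟩ := mem_iUnion₂.mp hc
    exact h B hB.1 hB.2 hxB
  have hclC : ∀ B ⊆ C, #B ≤ κ → closure B ⊆ C := by
    intro B hBC hBκ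
    have hch : ∀ b : B, ∃ D : Set X, (D ⊆ A ∧ #D ≤ κ) ∧ (b : X) ∈ closure D := by
      intro b
      obtain ⟨D, hD, hbD⟩ := mem_iUnion₂.mp (hBC b.2)
      exact ⟨D, hD, hbD⟩
    choose D hD hbD using hch
    set V : Set X := ⋃ b : B, D b with hV
    have hVA : V ⊆ A := iUnion_subset fun b => (hD b).1
    have hVκ : #V ≤ κ := by
      refine (mk_iUnion_le D).trans ?_
      calc #B * ⨆ b : B, #(D b) ≤ κ * κ :=
            mul_le_mul' hBκ (ciSup_le' fun b => (hD b).2)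
        _ = κ := mul_eq_self hκ
    have hBV : B ⊆ closure V := by
      intro b hb
      exact closure_mono (subset_iUnion D ⟨b, hb⟩) (hbD ⟨b, hb⟩)
    have h1 : closure B ⊆ closure V := by
      rw [show closure V = closure (closure V) from (closure_closure).symm]
      exact closure_mono hBV
    refine h1.trans ?_
    intro z hz
    exact mem_biUnion (show V ∈ _ from ⟨hVA, hVκ⟩) hz
  obtain ⟨S, hS, hcard⟩ := exists_free_of_kappa_closed κ hκ C x hxC hxnC hclC
  exact ⟨S, hS, by rw [hcard]; exact Order.lt_succ_of_le le_rfl⟩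

/-- Any free set is bounded by any cardinal witnessing the tightness property. -/
lemma card_le_of_free {τ : Cardinal.{u}} (hτ0 : ℵ₀ ≤ τ)
    (hτ : ∀ (A : Set X) (x : X), x ∈ closure A → ∃ B ⊆ A, #B ≤ τ ∧ x ∈ closure B)
    {S : Set X} (hS : IsFreeSet S) : #S ≤ τ := by
  classical
  by_contra hlt
  push_neg at hlt
  obtain ⟨r, wo, hfree⟩ := hS
  set ι := (Order.succ τ).ord.ToType with hι
  haveI := wo
  haveI hwoι : IsWellOrder ι (· < ·) := isWellOrder_lt
  haveI : Nonempty ι := by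
    refine mk_ne_zero_iff.mp ?_
    rw [mk_ord_toType]
    exact (lt_of_lt_of_le aleph0_pos (hτ0.trans (Order.le_succ τ))).ne'
  have h1 : (Order.succ τ).ord ≤ Ordinal.type r := by
    rw [Cardinal.ord_le, Ordinal.card_type]
    exact Order.succ_le_of_lt hlt
  have h2 : @Ordinal.type ι (· < ·) isWellOrder_lt ≤ Ordinal.type r := by
    rw [Ordinal.type_toType]; exact h1
  obtain ⟨g⟩ := (Ordinal.type_le_iff).mp h2
  set T : ι → Set X := fun ξ => closure (Subtype.val '' (⇑g '' Ici ξ)) with hT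
  have hTmono : ∀ {ξ ζ : ι}, ξ ≤ ζ → T ζ ⊆ T ξ := by
    intro ξ ζ h
    exact closure_mono (image_mono (image_mono fun δ hδ => h.trans hδ))
  obtain ⟨z, hz⟩ := IsCompact.nonempty_iInter_of_directed_nonempty_isCompact_isClosed
    T (fun ξ ζ => (le_total ξ ζ).elim
        (fun h => ⟨ζ, hTmono h, subset_rfl⟩) (fun h => ⟨ξ, subset_rfl, hTmono h⟩))
    (fun ξ => ⟨((g ξ : S) : X),
      subset_closure (mem_image_of_mem Subtype.val (mem_image_of_mem ⇑g self_mem_Ici))⟩)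
    (fun ξ => isClosed_closure.isCompact) (fun ξ => isClosed_closure)
  have hzS : z ∈ closure (Subtype.val '' (⇑g '' univ)) := by
    have : T (Classical.arbitrary ι) ⊆ closure (Subtype.val '' (⇑g '' univ)) :=
      closure_mono (image_mono (image_mono (subset_univ _)))
    exact this (mem_iInter.mp hz _)
  obtain ⟨B, hBsub, hBcard, hzB⟩ := hτ _ z hzS
  have hch : ∀ b : B, ∃ ξ : ι, ((g ξ : S) : X) = b := by
    intro b
    obtain ⟨a, ⟨ξ, _, rfl⟩, ha⟩ := hBsub b.2
    exact ⟨ξ, ha⟩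
  choose ζf hζf using hch
  have hbd : Set.Bounded (· < ·) (range ζf) := by
    by_contra hnb
    have hcf : IsCofinal (range ζf) := by
      intro a
      by_contra hc
      push_neg at hc
      exact hnb ⟨a, fun b hb => hc b hb⟩
    have hc1 := Order.cof_le hcf
    rw [Ordinal.cof_toType, (isRegular_succ hτ0).cof_ord] at hc1
    exact absurd (hc1.trans (mk_range_le.trans hBcard)) (not_le.mpr (Order.lt_succ_of_le le_rfl))
  obtain ⟨ξ, hξ⟩ := hbd
  have hmap : ∀ η : ι, r (g η) (g ξ) ↔ η < ξ := fun η => g.map_rel_iff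
  have hz1 : z ∈ closure (Subtype.val '' {a : S | r a (g ξ)}) := by
    refine closure_mono ?_ hzB
    intro b hb
    refine ⟨g (ζf ⟨b, hb⟩), (hmap _).mpr (hξ _ ⟨⟨b, hb⟩, rfl⟩), hζf ⟨b, hb⟩⟩
  have hz2 : z ∈ closure (Subtype.val '' {a : S | ¬ r a (g ξ)}) := by
    have : T ξ ⊆ closure (Subtype.val '' {a : S | ¬ r a (g ξ)}) := by
      apply closure_mono
      rintro _ ⟨_, ⟨η, hη, rfl⟩, rfl⟩
      exact ⟨g η, fun hc => absurd ((hmap η).mp hc) (not_lt.mpr hη), rfl⟩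
    exact this (mem_iInter.mp hz ξ)
  have : z ∈ (∅ : Set X) := (hfree (g ξ)) ▸ ⟨hz1, hz2⟩
  exact this

end Core

/-- Arhangelskii: in a compact Hausdorff space, the free set number
equals the tightness. -/
theorem freeSetNumber_eq_tightness {X : Type u} [TopologicalSpace X]
    [CompactSpace X] [T2Space X] :
    freeSetNumber X = tightness X := by
  classical
  have hne : {κ : Cardinal.{u} | ℵ₀ ≤ κ ∧ ∀ (A : Set X) (x : X), x ∈ closure A →
      ∃ B ⊆ A, #B ≤ κ ∧ x ∈ closure B}.Nonempty := by
    refine ⟨ℵ₀ ⊔ #X, le_sup_left, fun A x hx => ⟨A, subset_rfl, ?_, hx⟩⟩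
    exact (mk_subtype_le _).trans le_sup_right
  have hmem := csInf_mem hne
  apply le_antisymm
  · -- F(X) ≤ t(X)
    rw [freeSetNumber]
    apply sup_le hmem.1
    apply ciSup_le'
    rintro ⟨S, hS⟩
    exact card_le_of_free hmem.1 hmem.2 hS
  · -- t(X) ≤ F(X)
    rw [tightness]
    apply csInf_le'
    refine ⟨le_sup_left, ?_⟩
    intro A x hx
    by_contra hcon
    push_neg at hcon
    obtain ⟨S, hSfree, hcard⟩ :=
      exists_big_free (freeSetNumber X) (by rw [freeSetNumber]; exact le_sup_left) A x hx hcon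
    have hle : #S ≤ freeSetNumber X := by
      rw [freeSetNumber]
      refine le_trans ?_ le_sup_right
      exact le_csSup ⟨#X, by rintro c ⟨S', rfl⟩; exact mk_subtype_le _⟩
        ⟨⟨S, hSfree⟩, rfl⟩
    exact absurd hle (not_le.mpr hcard)
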